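/- Suppose f* ∈ H, a positive integer k with 1 ≤ k ≤ n+1, elements a₁,…,a_k ∈ A, functions g₁,…,g_k ∈ L^q(S,m) with ‖gᵢ‖_q ≤ 1, and positive real numbers λ₁,…,λ_k with λ₁+⋯+λ_k = 1 satisfy: (i) ∫_S (Σ_{i=1}^{k} λᵢ gᵢ) h dm = 0 for all h ∈ H; and (ii) ∫_S gᵢ (f_{aᵢ} − f*) dm = ‖f_{aᵢ} − f*‖_p = max_{a∈A} ‖f_a − f*‖_p for all i with 1 ≤ i ≤ k. Then f* is a best simultaneous approximation (BSA) to {f_a}_{a∈A} from H, i.e., max_{a∈A} ‖f_a − f*‖_p ≤ max_{a∈A} ‖f_a − f‖_p for all f ∈ H. -/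

import Mathlib

open MeasureTheory ContinuousLinearMap
open scoped ENNReal

/-!
Through the `L^q`–`L^p` pairing each `gᵢ` is a functional `φᵢ` of norm at most `1` on `L^p`.
For `f ∈ H`, condition (i) says that `∑ λᵢ φᵢ` vanishes on `f - f⋆ ∈ H`, so by (ii)
`max_a ‖f_a - f⋆‖ = ∑ λᵢ φᵢ (f_{aᵢ} - f⋆) = ∑ λᵢ φᵢ (f_{aᵢ} - f) ≤ ∑ λᵢ ‖f_{aᵢ} - f‖ ≤ max_a ‖f_a - f‖`.
-/

section
variable {α 𝕜 E F G : Type*} {m : MeasurableSpace α} {μ : Measure α} {p q : ℝ≥0∞}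
    [NontriviallyNormedField 𝕜] [NormedAddCommGroup E] [NormedAddCommGroup F] [NormedAddCommGroup G]
    [NormedSpace 𝕜 E] [NormedSpace 𝕜 F] [NormedSpace 𝕜 G] [NormedSpace ℝ G] [SMulCommClass ℝ 𝕜 G]
    [CompleteSpace G] [Fact (1 ≤ p)] [Fact (1 ≤ q)] [ENNReal.HolderConjugate p q]

theorem ContinuousLinearMap.norm_lpPairing_apply_le (B : E →L[𝕜] F →L[𝕜] G) (f : Lp E p μ) :
    ‖B.lpPairing μ p q f‖ ≤ ‖B‖ * ‖f‖ := by
  refine opNorm_le_bound _ (by positivity) fun g => ?_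
  calc ‖B.lpPairing μ p q f g‖ = ‖L1.integral (B.holder 1 f g)‖ := by
        rw [L1.integral_eq' 𝕜]; rfl
    _ ≤ ‖B.holder 1 f g‖ := L1.norm_integral_le _
    _ ≤ ‖B‖ * ‖f‖ * ‖g‖ := B.norm_holder_apply_apply_le f g
end

section
variable {α : Type*} {m : MeasurableSpace α} {μ : Measure α} {p q : ℝ≥0∞}
    [Fact (1 ≤ p)] [Fact (1 ≤ q)] [ENNReal.HolderConjugate p q]

theorem ContinuousLinearMap.lpPairing_mul_apply (f : Lp ℝ p μ) (g : Lp ℝ q μ) :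
    (mul ℝ ℝ).lpPairing μ p q f g = ∫ x, f x * g x ∂μ :=
  lpPairing_eq_integral _ f g

theorem ContinuousLinearMap.norm_lpPairing_mul_apply_le (f : Lp ℝ p μ) :
    ‖(mul ℝ ℝ).lpPairing μ p q f‖ ≤ ‖f‖ :=
  ((mul ℝ ℝ).norm_lpPairing_apply_le f).trans
    (mul_le_of_le_one_left (norm_nonneg f) (opNorm_mul_le ℝ ℝ))
end

theorem sum_mul_apply_sub_le_sum_mul_norm_sub {ι E : Type*} [Fintype ι]
    [SeminormedAddCommGroup E] [NormedSpace ℝ E] {H : Submodule ℝ E} {φ : ι → StrongDual ℝ E}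
    (hφ : ∀ i, ‖φ i‖ ≤ 1) {lam : ι → ℝ} (hlam : ∀ i, 0 ≤ lam i)
    (hφH : ∀ h ∈ H, ∑ i, lam i * φ i h = 0) (x : ι → E) {f₀ f : E} (hf₀ : f₀ ∈ H) (hf : f ∈ H) :
    ∑ i, lam i * φ i (x i - f₀) ≤ ∑ i, lam i * ‖x i - f‖ :=
  calc ∑ i, lam i * φ i (x i - f₀)
      = ∑ i, lam i * φ i (x i - f) + ∑ i, lam i * φ i (f - f₀) := by
        rw [← Finset.sum_add_distrib]
        refine Finset.sum_congr rfl fun i _ => ?_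
        rw [← mul_add, ← map_add, sub_add_sub_cancel]
    _ = ∑ i, lam i * φ i (x i - f) := by rw [hφH _ (H.sub_mem hf hf₀), add_zero]
    _ ≤ ∑ i, lam i * ‖x i - f‖ := by
        refine Finset.sum_le_sum fun i _ => mul_le_mul_of_nonneg_left ?_ (hlam i)
        calc φ i (x i - f) ≤ ‖φ i (x i - f)‖ := Real.le_norm_self _
          _ ≤ 1 * ‖x i - f‖ := (φ i).le_of_opNorm_le (hφ i) _
          _ = ‖x i - f‖ := one_mul _

theorem bsa_Lp_sufficiency
    {S : Type*} [MeasurableSpace S] (m : Measure S)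
    (p q : ℝ≥0∞) [Fact (1 ≤ p)] (hpq : p⁻¹ + q⁻¹ = 1)
    {A : Type*} [TopologicalSpace A] [CompactSpace A]
    (H : Submodule ℝ (Lp ℝ p m))
    (F : A → Lp ℝ p m) (hF : Continuous F)
    (fs : Lp ℝ p m) (hfs : fs ∈ H)
    (k : ℕ)
    (a : Fin k → A) (g : Fin k → Lp ℝ q m) (hg : ∀ i, ‖g i‖ ≤ 1)
    (lam : Fin k → ℝ) (hlam : ∀ i, 0 < lam i) (hsum : (∑ i, lam i) = 1)
    (hi : ∀ h ∈ H, (∫ s, (∑ i, lam i * g i s) * h s ∂m) = 0)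
    (hii : ∀ i, (∫ s, g i s * (F (a i) s - fs s) ∂m) = ‖F (a i) - fs‖ ∧
        ‖F (a i) - fs‖ = ⨆ b : A, ‖F b - fs‖) :
    ∀ f ∈ H, (⨆ a : A, ‖F a - fs‖) ≤ ⨆ a : A, ‖F a - f‖ := by
  intro f hf
  have : ENNReal.HolderConjugate q p := (ENNReal.holderConjugate_iff.2 hpq).symm
  have : Fact (1 ≤ q) := ⟨ENNReal.HolderConjugate.one_le q p⟩
  set φ := fun i => (mul ℝ ℝ).lpPairing m q p (g i)
  have hφH : ∀ h ∈ H, ∑ i, lam i * φ i h = 0 := by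
    intro h hh
    have hint i : Integrable (fun s => lam i * (g i s * h s)) m :=
      ((Lp.memLp (g i)).integrable_mul (Lp.memLp h)).const_mul (lam i)
    rw [← hi h hh]
    simp only [Finset.sum_mul, mul_assoc]
    rw [integral_finsetSum _ fun i _ => hint i]
    simp only [φ, lpPairing_mul_apply, integral_const_mul]
  have hφM i : φ i (F (a i) - fs) = ⨆ b : A, ‖F b - fs‖ := by
    rw [← (hii i).2, ← (hii i).1, lpPairing_mul_apply]
    refine integral_congr_ae ?_
    filter_upwards [Lp.coeFn_sub (F (a i)) fs] with s hs
    rw [hs, Pi.sub_apply]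
  have hbdd : BddAbove (Set.range fun b => ‖F b - f‖) :=
    (isCompact_range (hF.sub continuous_const).norm).bddAbove
  calc (⨆ b : A, ‖F b - fs‖) = ∑ i, lam i * φ i (F (a i) - fs) := by
        simp only [hφM, ← Finset.sum_mul, hsum, one_mul]
    _ ≤ ∑ i, lam i * ‖F (a i) - f‖ :=
        sum_mul_apply_sub_le_sum_mul_norm_sub
          (fun i => (norm_lpPairing_mul_apply_le (g i)).trans (hg i)) (fun i => (hlam i).le)
          hφH _ hfs hf
    _ ≤ ∑ i, lam i * ⨆ b : A, ‖F b - f‖ :=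
        Finset.sum_le_sum fun i _ => mul_le_mul_of_nonneg_left (le_ciSup hbdd (a i)) (hlam i).le
    _ = ⨆ b : A, ‖F b - f‖ := by rw [← Finset.sum_mul, hsum, one_mul]
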